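/- arXiv:2302.03005 — 2 statements merged into one kernel-verified Lean document; each statement's English description precedes it below -/
import Mathlib

section
/- For n = 1 (so α = 1) and any D ≥ 0, the self-similar problem (ss-new) has the unique solution B = B_D := (15/2)(−D + √(4/5 + D²)) and H(x) = (B_D·D/2)(1 − x²) + (B_D²/24)(1 − x²)²; that is, this explicit pair solves the problem and any solution coincides with it. -/
/-! For `n = 1` the equation is linear, `H''' = B² x`, so together with `H'(0) = 0` and `H(1) = 0`
it leaves a one-parameter family of profiles `a/2 (1 - x²) + B²/24 (1 - x²)²`, with `H'(1) = -a`.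
Positivity of `H` near the contact line forces `a ≥ 0`, so the slope condition `H'(1)² = D² B²`
gives `a = B D`; the mass constraint then reads `B² + 15 D B = 45`, whose only positive root
is `B_D`. -/

/-- First derivative within `[0,1)`. -/
noncomputable def dIco (f : ℝ → ℝ) : ℝ → ℝ := derivWithin f (Set.Ico 0 1)

/-- Third derivative within `[0,1)`. -/
noncomputable def d3Ico (f : ℝ → ℝ) : ℝ → ℝ := dIco (dIco (dIco f))

/-- `(B, H)` is a solution of the self-similar problem (ss-new) with mobility exponent `n`
and contact-line friction coefficient `D` (here `α = 4/(n+3)`). -/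
def IsSSNew (n D B : ℝ) (H : ℝ → ℝ) : Prop :=
  0 < B ∧
  ContinuousOn H (Set.Icc 0 1) ∧
  (∀ x ∈ Set.Ico (0:ℝ) 1, 0 < H x) ∧
  ContDiffOn ℝ 3 H (Set.Ico 0 1) ∧
  (∀ x ∈ Set.Ioo (0:ℝ) 1, H x ^ (n - 1) * d3Ico H x = B ^ 2 * x) ∧
  dIco H 0 = 0 ∧
  H 1 = 0 ∧
  Filter.Tendsto (fun x => (dIco H x) ^ 2) (nhdsWithin 1 (Set.Iio 1))
    (nhds (D ^ 2 * B ^ (2 * (4 / (n + 3))))) ∧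
  (∫ x in (0:ℝ)..1, H x) = 1

/-- The explicit constant `B_D = (15/2)(−D + √(4/5 + D²))` for `n = 1`. -/
noncomputable def BD (D : ℝ) : ℝ := 15 / 2 * (-D + Real.sqrt (4 / 5 + D ^ 2))

/-- The explicit self-similar profile for `n = 1`. -/
noncomputable def HD (D : ℝ) (x : ℝ) : ℝ :=
  BD D * D / 2 * (1 - x ^ 2) + (BD D) ^ 2 / 24 * (1 - x ^ 2) ^ 2

open Set Filter Topology

theorem Convex.eqOn_of_hasDerivAt_eq {s : Set ℝ} (hs : Convex ℝ s) {f g f' : ℝ → ℝ}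
    (hf : ContinuousOn f s) (hg : ContinuousOn g s)
    (hf' : ∀ x ∈ interior s, HasDerivAt f (f' x) x)
    (hg' : ∀ x ∈ interior s, HasDerivAt g (f' x) x) {x₀ : ℝ} (hx₀ : x₀ ∈ s)
    (hfg : f x₀ = g x₀) : EqOn f g s := by
  have hd : ∀ x ∈ interior s, HasDerivAt (f - g) 0 x := fun x hx => by
    simpa using (hf' x hx).sub (hg' x hx)
  have hdiff : DifferentiableOn ℝ (f - g) (interior s) := fun x hx =>
    (hd x hx).differentiableAt.differentiableWithinAt
  have hmono := monotoneOn_of_deriv_nonneg hs (hf.sub hg) hdiff fun x hx => (hd x hx).deriv.ge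
  have hanti := antitoneOn_of_deriv_nonpos hs (hf.sub hg) hdiff fun x hx => (hd x hx).deriv.le
  intro x hx
  suffices (f - g) x = (f - g) x₀ by simpa [hfg, sub_eq_zero] using this
  rcases le_total x x₀ with h | h
  · exact le_antisymm (hmono hx hx₀ h) (hanti hx hx₀ h)
  · exact le_antisymm (hanti hx₀ hx h) (hmono hx₀ hx h)

lemma hasDerivAt_dIco {f : ℝ → ℝ} (hf : DifferentiableOn ℝ f (Ico 0 1)) {x : ℝ}
    (hx : x ∈ Ioo (0 : ℝ) 1) : HasDerivAt f (dIco f x) x :=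
  (hf x (Ioo_subset_Ico_self hx)).hasDerivWithinAt.hasDerivAt (Ico_mem_nhds hx.1 hx.2)

lemma HasDerivAt.dIco_eq {f : ℝ → ℝ} {f' x : ℝ} (hf : HasDerivAt f f' x)
    (hx : x ∈ Ico (0 : ℝ) 1) : dIco f x = f' :=
  hf.hasDerivWithinAt.derivWithin (uniqueDiffOn_Ico 0 1 x hx)

lemma dIco_congr {f g : ℝ → ℝ} (h : EqOn f g (Ico 0 1)) : EqOn (dIco f) (dIco g) (Ico 0 1) :=
  fun _ hx => derivWithin_congr h (h hx)

lemma d3Ico_congr {f g : ℝ → ℝ} (h : EqOn f g (Ico 0 1)) :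
    EqOn (d3Ico f) (d3Ico g) (Ico 0 1) :=
  dIco_congr (dIco_congr (dIco_congr h))

theorem IsSSNew.congr {n D B : ℝ} {H G : ℝ → ℝ} (hH : IsSSNew n D B H)
    (hHG : EqOn H G (Icc 0 1)) : IsSSNew n D B G := by
  obtain ⟨hB, hcont, hpos, hsmooth, hode, hd0, h1, hlim, hint⟩ := hH
  have hIco : EqOn H G (Ico 0 1) := hHG.mono Ico_subset_Icc_self
  have hd := dIco_congr hIco
  refine ⟨hB, hcont.congr hHG.symm, fun x hx => hHG (Ico_subset_Icc_self hx) ▸ hpos x hx,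
    hsmooth.congr hIco.symm, fun x hx => ?_, hd (left_mem_Ico.2 zero_lt_one) ▸ hd0,
    hHG (right_mem_Icc.2 zero_le_one) ▸ h1, ?_, ?_⟩
  · rw [← hHG (Ioo_subset_Icc_self hx), ← d3Ico_congr hIco (Ioo_subset_Ico_self hx)]
    exact hode x hx
  · exact hlim.congr' (eventually_of_mem (Ico_mem_nhdsLT zero_lt_one) fun x hx => by rw [hd hx])
  · rwa [← intervalIntegral.integral_congr (by rwa [uIcc_of_le zero_le_one])]

noncomputable def profile (a b x : ℝ) : ℝ := a / 2 * (1 - x ^ 2) + b / 24 * (1 - x ^ 2) ^ 2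

lemma hasDerivAt_profile (a b x : ℝ) :
    HasDerivAt (profile a b) (-(a * x) - b / 6 * x * (1 - x ^ 2)) x := by
  have h1 : HasDerivAt (fun x : ℝ => 1 - x ^ 2) (-(2 * x)) x := by
    simpa using (hasDerivAt_pow 2 x).const_sub 1
  exact ((h1.const_mul (a / 2)).add ((h1.pow 2).const_mul (b / 24))).congr_deriv (by ring)

lemma hasDerivAt_profile_deriv (a b x : ℝ) :
    HasDerivAt (fun x => -(a * x) - b / 6 * x * (1 - x ^ 2)) (-a - b / 6 + b / 2 * x ^ 2) x :=
  (((hasDerivAt_id' x).const_mul a).neg.sub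
    (((hasDerivAt_id' x).const_mul (b / 6)).mul ((hasDerivAt_pow 2 x).const_sub 1))).congr_deriv
    (by push_cast; ring)

lemma hasDerivAt_profile_deriv2 (a b x : ℝ) :
    HasDerivAt (fun x => -a - b / 6 + b / 2 * x ^ 2) (b * x) x :=
  (((hasDerivAt_pow 2 x).const_mul (b / 2)).const_add (-a - b / 6)).congr_deriv
    (by push_cast; ring)

section profile

variable {a b : ℝ}

lemma dIco_profile {x : ℝ} (hx : x ∈ Ico (0 : ℝ) 1) :
    dIco (profile a b) x = -(a * x) - b / 6 * x * (1 - x ^ 2) :=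
  (hasDerivAt_profile a b x).dIco_eq hx

lemma d3Ico_profile {x : ℝ} (hx : x ∈ Ico (0 : ℝ) 1) : d3Ico (profile a b) x = b * x := by
  have h2 : EqOn (dIco (dIco (profile a b))) (fun x => -a - b / 6 + b / 2 * x ^ 2) (Ico 0 1) :=
    fun y hy => (dIco_congr (fun _ hz => dIco_profile hz) hy).trans
      ((hasDerivAt_profile_deriv a b y).dIco_eq hy)
  exact (dIco_congr h2 hx).trans ((hasDerivAt_profile_deriv2 a b x).dIco_eq hx)

lemma tendsto_dIco_profile_sq :
    Tendsto (fun x => dIco (profile a b) x ^ 2) (𝓝[<] 1) (𝓝 (a ^ 2)) := by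
  have hc : Continuous fun x : ℝ => (-(a * x) - b / 6 * x * (1 - x ^ 2)) ^ 2 := by fun_prop
  have h := (hc.tendsto 1).mono_left (nhdsWithin_le_nhds (s := Iio 1))
  norm_num at h
  exact h.congr' (eventually_of_mem (Ico_mem_nhdsLT zero_lt_one) fun x hx => by
    simp only [dIco_profile hx])

lemma integral_profile : ∫ x in (0 : ℝ)..1, profile a b x = a / 3 + b / 45 := by
  have h : ∀ x ∈ uIcc (0 : ℝ) 1, HasDerivAt
      (fun x => (a / 2 + b / 24) * x - (a / 6 + b / 36) * x ^ 3 + b / 120 * x ^ 5)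
      (profile a b x) x := fun x _ =>
    ((((hasDerivAt_id' x).const_mul (a / 2 + b / 24)).sub
      ((hasDerivAt_pow 3 x).const_mul (a / 6 + b / 36))).add
      ((hasDerivAt_pow 5 x).const_mul (b / 120))).congr_deriv (by unfold profile; push_cast; ring)
  rw [intervalIntegral.integral_eq_sub_of_hasDerivAt h
    ((by unfold profile; fun_prop : Continuous (profile a b)).intervalIntegrable 0 1)]
  ring

lemma forall_profile_pos_iff (hb : 0 < b) :
    (∀ x ∈ Ico (0 : ℝ) 1, 0 < profile a b x) ↔ 0 ≤ a := by
  have hfactor : ∀ x, profile a b x = (1 - x ^ 2) * (a / 2 + b / 24 * (1 - x ^ 2)) := fun x => by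
    unfold profile; ring
  constructor
  · intro h
    have hc : Continuous fun x : ℝ => a / 2 + b / 24 * (1 - x ^ 2) := by fun_prop
    have hlim := (hc.tendsto 1).mono_left (nhdsWithin_le_nhds (s := Iio 1))
    norm_num at hlim
    have := ge_of_tendsto hlim (eventually_of_mem (Ico_mem_nhdsLT zero_lt_one) fun x hx => by
      have h1 : 0 < 1 - x ^ 2 := by nlinarith [hx.1, hx.2]
      have := h x hx
      rw [hfactor] at this
      exact (pos_of_mul_pos_right this h1.le).le)
    linarith
  · intro ha x hx
    have h1 : 0 < 1 - x ^ 2 := by nlinarith [hx.1, hx.2]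
    rw [hfactor]
    positivity

end profile

theorem exists_eqOn_profile {b : ℝ} {H : ℝ → ℝ} (hcont : ContinuousOn H (Icc 0 1))
    (hsmooth : ContDiffOn ℝ 3 H (Ico 0 1)) (hode : ∀ x ∈ Ioo (0 : ℝ) 1, d3Ico H x = b * x)
    (hd0 : dIco H 0 = 0) (h1 : H 1 = 0) : ∃ a, EqOn H (profile a b) (Icc 0 1) := by
  have hH1 : ContDiffOn ℝ 2 (dIco H) (Ico 0 1) :=
    hsmooth.derivWithin (uniqueDiffOn_Ico 0 1) (by norm_num)
  have hH2 : ContDiffOn ℝ 1 (dIco (dIco H)) (Ico 0 1) :=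
    hH1.derivWithin (uniqueDiffOn_Ico 0 1) (by norm_num)
  set a := -dIco (dIco H) 0 - b / 6
  have e2 : EqOn (dIco (dIco H)) (fun x => -a - b / 6 + b / 2 * x ^ 2) (Ico 0 1) := by
    refine (convex_Ico 0 1).eqOn_of_hasDerivAt_eq hH2.continuousOn (by fun_prop)
      (fun x hx => ?_) (fun x _ => hasDerivAt_profile_deriv2 a b x)
      (left_mem_Ico.2 zero_lt_one) (by simp [a])
    rw [interior_Ico] at hx
    exact hode x hx ▸ hasDerivAt_dIco (hH2.differentiableOn one_ne_zero) hx
  have e1 : EqOn (dIco H) (fun x => -(a * x) - b / 6 * x * (1 - x ^ 2)) (Ico 0 1) := by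
    refine (convex_Ico 0 1).eqOn_of_hasDerivAt_eq hH1.continuousOn (by fun_prop)
      (fun x hx => ?_) (fun x _ => hasDerivAt_profile_deriv a b x)
      (left_mem_Ico.2 zero_lt_one) (by simp [hd0])
    rw [interior_Ico] at hx
    exact (hasDerivAt_dIco (hH1.differentiableOn (by norm_num)) hx).congr_deriv
      (e2 (Ioo_subset_Ico_self hx))
  refine ⟨a, (convex_Icc 0 1).eqOn_of_hasDerivAt_eq hcont
    (by unfold profile; fun_prop) (fun x hx => ?_) (fun x _ => hasDerivAt_profile a b x)
    (right_mem_Icc.2 zero_le_one) (by simp [h1, profile])⟩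
  rw [interior_Icc] at hx
  exact (hasDerivAt_dIco (hsmooth.differentiableOn (by norm_num)) hx).congr_deriv
    (e1 (Ioo_subset_Ico_self hx))

theorem isSSNew_one_profile_iff {D B a : ℝ} (hD : 0 ≤ D) (hB : 0 < B) :
    IsSSNew 1 D B (profile a (B ^ 2)) ↔ a = B * D ∧ B ^ 2 + 15 * D * B = 45 := by
  have hexp : B ^ (2 * (4 / ((1 : ℝ) + 3))) = B ^ 2 := by norm_num
  have hBD : 0 ≤ B * D := mul_nonneg hB.le hD
  constructor
  · rintro ⟨-, -, hpos, -, -, -, -, hlim, hint⟩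
    have ha := (forall_profile_pos_iff (by positivity)).1 hpos
    rw [hexp, ← mul_pow, mul_comm D] at hlim
    have haBD : a = B * D :=
      (pow_left_inj₀ ha hBD two_ne_zero).1 (tendsto_nhds_unique tendsto_dIco_profile_sq hlim)
    rw [integral_profile, haBD] at hint
    exact ⟨haBD, by linarith⟩
  · rintro ⟨rfl, hmass⟩
    refine ⟨hB, (by unfold profile; fun_prop : Continuous _).continuousOn,
      (forall_profile_pos_iff (by positivity)).2 hBD,
      (by unfold profile; fun_prop : ContDiff ℝ 3 _).contDiffOn, fun x hx => ?_, ?_, ?_, ?_, ?_⟩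
    · rw [d3Ico_profile (Ioo_subset_Ico_self hx)]
      norm_num
    · rw [dIco_profile (left_mem_Ico.2 zero_lt_one)]
      ring
    · simp [profile]
    · rw [hexp, ← mul_pow, mul_comm D]
      exact tendsto_dIco_profile_sq
    · rw [integral_profile]
      linarith

lemma BD_sq_add (D : ℝ) : BD D ^ 2 + 15 * D * BD D = 45 := by
  have hs : Real.sqrt (4 / 5 + D ^ 2) ^ 2 = 4 / 5 + D ^ 2 := Real.sq_sqrt (by positivity)
  unfold BD
  linear_combination (225 / 4) * hs

lemma abs_lt_sqrt_four_fifths_add_sq (D : ℝ) : |D| < Real.sqrt (4 / 5 + D ^ 2) :=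
  Real.lt_sqrt_of_sq_lt (by rw [sq_abs]; linarith)

lemma BD_pos (D : ℝ) : 0 < BD D := by
  have := abs_lt_sqrt_four_fifths_add_sq D
  unfold BD
  linarith [le_abs_self D]

lemma eq_BD_of_sq_add {D B : ℝ} (hB : 0 < B) (h : B ^ 2 + 15 * D * B = 45) : B = BD D := by
  have : 0 < B + BD D + 15 * D := by
    have := abs_lt_sqrt_four_fifths_add_sq D
    unfold BD
    linarith [neg_abs_le D]
  have hfac : (B - BD D) * (B + BD D + 15 * D) = 0 := by linear_combination h - BD_sq_add D
  linarith [(mul_eq_zero.1 hfac).resolve_right this.ne']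

/-- For `n = 1` (so `α = 1`) and any `D ≥ 0`, the self-similar problem (ss-new) has the unique
solution `(B_D, H_D)` given by the explicit formulas above. -/
theorem ssnew_n1_explicit (D : ℝ) (hD : 0 ≤ D) :
    IsSSNew 1 D (BD D) (HD D) ∧
    ∀ B H, IsSSNew 1 D B H → B = BD D ∧ ∀ x ∈ Set.Icc (0:ℝ) 1, H x = HD D x := by
  refine ⟨(isSSNew_one_profile_iff hD (BD_pos D)).2 ⟨rfl, BD_sq_add D⟩, fun B H hH => ?_⟩
  obtain ⟨hB, hcont, -, hsmooth, hode, hd0, h1, -⟩ := id hH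
  obtain ⟨a, ha⟩ := exists_eqOn_profile hcont hsmooth
    (fun x hx => by simpa using hode x hx) hd0 h1
  obtain ⟨rfl, hmass⟩ := (isSSNew_one_profile_iff hD hB).1 (hH.congr ha)
  obtain rfl := eq_BD_of_sq_add hB hmass
  exact ⟨rfl, ha⟩
end

section
/- Let n ∈ [1,3). Then C₁ := (1/2) ∫_0^1 x (x³ − 3x + 2)(1 − x²)^(1−n) dx is finite, the function H₁(x) := (C₁/2)(1 − x²) − ∫_x^1 ∫_0^{x₁} x₂ (x₁ − x₂)(1 − x₂²)^(1−n) dx₂ dx₁ is well defined for x ∈ [0,1) and three times continuously differentiable on [0,1), and it satisfies H₁'''(x) = x (1 − x²)^(1−n) for all x ∈ (0,1), H₁'(0) = 0, H₁''(0) = −C₁, lim_{x→1⁻} H₁(x) = 0, and ∫_0^1 H₁(x) dx = 0. -/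
open Set MeasureTheory intervalIntegral Filter Topology
open scoped Interval

section DerivWithin

variable {s : Set ℝ} {f g g' : ℝ → ℝ}

lemma derivWithin_eqOn_of_hasDerivWithinAt (hs : UniqueDiffOn ℝ s) (hfg : EqOn f g s)
    (hg : ∀ x ∈ s, HasDerivWithinAt g (g' x) s x) : EqOn (derivWithin f s) g' s := by
  intro x hx
  rw [derivWithin_congr hfg (hfg hx)]
  exact (hg x hx).derivWithin (hs x hx)

lemma contDiffOn_succ_of_hasDerivWithinAt {k : ℕ} (hs : UniqueDiffOn ℝ s)
    (hg : ∀ x ∈ s, HasDerivWithinAt g (g' x) s x) (hg' : ContDiffOn ℝ k g' s) :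
    ContDiffOn ℝ (k + 1) g s :=
  (contDiffOn_succ_iff_derivWithin hs).2 ⟨fun x hx => (hg x hx).differentiableWithinAt,
    by simp, hg'.congr fun x hx => (hg x hx).derivWithin (hs x hx)⟩

end DerivWithin

namespace CorrectionProfile

variable {f m : ℝ → ℝ} {x y : ℝ}

lemma intervalIntegrable_of_continuousOn_Ioo (hf : ContinuousOn f (Ioo (-1) 1))
    (hx : x ∈ Ioo (-1 : ℝ) 1) : IntervalIntegrable f volume 0 x :=
  (hf.mono (ordConnected_Ioo.uIcc_subset ⟨by norm_num, by norm_num⟩ hx)).intervalIntegrable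

lemma hasDerivAt_integral_of_continuousOn_Ioo (hf : ContinuousOn f (Ioo (-1) 1))
    (hx : x ∈ Ioo (-1 : ℝ) 1) : HasDerivAt (fun y => ∫ t in (0 : ℝ)..y, f t) (f x) x :=
  integral_hasDerivAt_right (intervalIntegrable_of_continuousOn_Ioo hf hx)
    (hf.stronglyMeasurableAtFilter isOpen_Ioo x hx) (hf.continuousAt (isOpen_Ioo.mem_nhds hx))

noncomputable def secondPrimitive (m : ℝ → ℝ) (x : ℝ) : ℝ :=
  ∫ t in (0 : ℝ)..x, (x - t) * m t

lemma secondPrimitive_eq (hm : ContinuousOn m (Ioo (-1) 1)) (hx : x ∈ Ioo (-1 : ℝ) 1) :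
    secondPrimitive m x = x * (∫ t in (0 : ℝ)..x, m t) - ∫ t in (0 : ℝ)..x, t * m t := by
  have h0 := intervalIntegrable_of_continuousOn_Ioo hm hx
  have h1 := intervalIntegrable_of_continuousOn_Ioo (f := fun t => t * m t)
    (continuousOn_id.mul hm) hx
  rw [← intervalIntegral.integral_const_mul, ← integral_sub (h0.const_mul x) h1]
  exact integral_congr fun t _ => by ring

lemma hasDerivAt_secondPrimitive (hm : ContinuousOn m (Ioo (-1) 1)) (hx : x ∈ Ioo (-1 : ℝ) 1) :
    HasDerivAt (secondPrimitive m) (∫ t in (0 : ℝ)..x, m t) x := by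
  have h := ((hasDerivAt_id' x).mul (hasDerivAt_integral_of_continuousOn_Ioo hm hx)).sub
    (hasDerivAt_integral_of_continuousOn_Ioo (f := fun t => t * m t) (continuousOn_id.mul hm) hx)
  refine (h.congr_of_eventuallyEq ?_).congr_deriv (by simp)
  filter_upwards [isOpen_Ioo.mem_nhds hx] with y hy using secondPrimitive_eq hm hy

noncomputable def cubicPrimitive (m : ℝ → ℝ) (y : ℝ) : ℝ :=
  ∫ t in (0 : ℝ)..y, (y - t) ^ 2 * (2 * y + t) / 6 * m t

lemma cubicPrimitive_eq (hm : ContinuousOn m (Ioo (-1) 1)) (hy : y ∈ Ioo (-1 : ℝ) 1) :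
    cubicPrimitive m y = y ^ 3 / 3 * (∫ t in (0 : ℝ)..y, m t)
      - y ^ 2 / 2 * (∫ t in (0 : ℝ)..y, t * m t)
      + 1 / 6 * ∫ t in (0 : ℝ)..y, t ^ 3 * m t := by
  have h0 := (intervalIntegrable_of_continuousOn_Ioo hm hy).const_mul (y ^ 3 / 3)
  have h1 := (intervalIntegrable_of_continuousOn_Ioo (f := fun t => t * m t)
    (continuousOn_id.mul hm) hy).const_mul (y ^ 2 / 2)
  have h3 := (intervalIntegrable_of_continuousOn_Ioo (f := fun t => t ^ 3 * m t)
    ((continuousOn_pow 3).mul hm) hy).const_mul (1 / 6)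
  simp only [← intervalIntegral.integral_const_mul]
  rw [← integral_sub h0 h1, ← integral_add (h0.sub h1) h3]
  exact integral_congr fun t _ => by ring

lemma hasDerivAt_cubicPrimitive (hm : ContinuousOn m (Ioo (-1) 1)) (hy : y ∈ Ioo (-1 : ℝ) 1) :
    HasDerivAt (cubicPrimitive m) (y * secondPrimitive m y) y := by
  have h0 := hasDerivAt_integral_of_continuousOn_Ioo hm hy
  have h1 := hasDerivAt_integral_of_continuousOn_Ioo (f := fun t => t * m t)
    (continuousOn_id.mul hm) hy
  have h3 := hasDerivAt_integral_of_continuousOn_Ioo (f := fun t => t ^ 3 * m t)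
    ((continuousOn_pow 3).mul hm) hy
  have h := ((((hasDerivAt_pow 3 y).div_const 3).mul h0).sub
    (((hasDerivAt_pow 2 y).div_const 2).mul h1)).add (h3.const_mul (1 / 6))
  refine (h.congr_of_eventuallyEq ?_).congr_deriv ?_
  · filter_upwards [isOpen_Ioo.mem_nhds hy] with z hz using cubicPrimitive_eq hm hz
  · rw [secondPrimitive_eq hm hy]
    simp only [Nat.cast_ofNat]
    ring

lemma intervalIntegrable_sub_mul (hm : ContinuousOn m (Ioo (-1) 1))
    (hm1 : IntervalIntegrable (fun t => (1 - t) * m t) volume 0 1) (hy : y ∈ Icc (0 : ℝ) 1) :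
    IntervalIntegrable (fun t => (y - t) * m t) volume 0 y := by
  rcases hy.2.eq_or_lt with rfl | hy1
  · exact hm1
  · exact intervalIntegrable_of_continuousOn_Ioo ((continuousOn_const.sub continuousOn_id).mul hm)
      ⟨by linarith [hy.1], hy1⟩

lemma integral_zero_one_eq_of_eqOn {g : ℝ → ℝ} (hy : y ∈ Icc (0 : ℝ) 1)
    (hg : IntervalIntegrable g volume 0 y) (hfg : EqOn f g (Icc 0 y)) (hf : EqOn f 0 (Icc y 1)) :
    ∫ t in (0 : ℝ)..1, f t = ∫ t in (0 : ℝ)..y, g t := by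
  rw [← uIcc_of_le hy.1] at hfg
  rw [← uIcc_of_le hy.2] at hf
  have hf0 : IntervalIntegrable f volume 0 y :=
    (intervalIntegrable_congr (hfg.mono uIoc_subset_uIcc)).2 hg
  have hf1 : IntervalIntegrable f volume y 1 :=
    (intervalIntegrable_congr (hf.mono uIoc_subset_uIcc)).2 intervalIntegrable_const
  rw [← integral_add_adjacent_intervals hf0 hf1, integral_congr hfg, integral_congr hf]
  simp

lemma continuousOn_integral_mul (hm : ContinuousOn m (Ioo (-1) 1))
    (hm1 : IntervalIntegrable (fun t => (1 - t) * m t) volume 0 1) {φ : ℝ → ℝ → ℝ}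
    (hφ : Continuous (Function.uncurry φ))
    (hφ1 : ∀ y ∈ Icc (0 : ℝ) 1, ∀ t ∈ Icc (0 : ℝ) 1, |φ y t| ≤ 1 - t) :
    ContinuousOn (fun y => ∫ t in (0 : ℝ)..1, φ y t * m t) (Icc 0 1) := by
  have hmeas : AEStronglyMeasurable m (volume.restrict (Ι 0 1)) := by
    rw [uIoc_of_le zero_le_one, ← Measure.restrict_congr_set Ioo_ae_eq_Ioc]
    exact (hm.mono (Ioo_subset_Ioo_left (by norm_num))).aestronglyMeasurable measurableSet_Ioo
  refine fun y₀ _ => continuousWithinAt_of_dominated_interval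
    (bound := fun t => |(1 - t) * m t|) ?_ ?_ hm1.abs ?_
  · exact Eventually.of_forall fun y => (hφ.uncurry_left y).aestronglyMeasurable.mul hmeas
  · filter_upwards [self_mem_nhdsWithin] with y hy
    refine Eventually.of_forall fun t ht => ?_
    rw [uIoc_of_le zero_le_one] at ht
    rw [norm_mul, Real.norm_eq_abs, abs_mul, abs_of_nonneg (sub_nonneg.2 ht.2)]
    exact mul_le_mul_of_nonneg_right (hφ1 y hy t (Ioc_subset_Icc_self ht)) (abs_nonneg _)
  · exact Eventually.of_forall fun t _ =>
      ((hφ.uncurry_right t).mul continuous_const).continuousWithinAt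

lemma continuousOn_secondPrimitive (hm : ContinuousOn m (Ioo (-1) 1))
    (hm1 : IntervalIntegrable (fun t => (1 - t) * m t) volume 0 1) :
    ContinuousOn (secondPrimitive m) (Icc 0 1) := by
  refine (continuousOn_integral_mul hm hm1 (φ := fun y t => max (y - t) 0) (by fun_prop)
    fun y hy t ht => ?_).congr fun y hy => ?_
  · rw [abs_of_nonneg (le_max_right _ _)]
    exact max_le (by linarith [hy.2]) (by linarith [ht.2])
  · refine (integral_zero_one_eq_of_eqOn hy (intervalIntegrable_sub_mul hm hm1 hy)
      (fun t ht => ?_) (fun t ht => ?_)).symm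
    · simp [max_eq_left (sub_nonneg.2 ht.2)]
    · simp [max_eq_right (sub_nonpos.2 ht.1)]

lemma intervalIntegrable_cubicKernel (hm : ContinuousOn m (Ioo (-1) 1))
    (hm1 : IntervalIntegrable (fun t => (1 - t) * m t) volume 0 1) (hy : y ∈ Icc (0 : ℝ) 1) :
    IntervalIntegrable (fun t => (y - t) ^ 2 * (2 * y + t) / 6 * m t) volume 0 y := by
  convert (intervalIntegrable_sub_mul hm hm1 hy).continuousOn_mul
    (g := fun t => (y - t) * (2 * y + t) / 6) (by fun_prop) using 1
  ext t; ring

lemma continuousOn_cubicPrimitive (hm : ContinuousOn m (Ioo (-1) 1))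
    (hm1 : IntervalIntegrable (fun t => (1 - t) * m t) volume 0 1) :
    ContinuousOn (cubicPrimitive m) (Icc 0 1) := by
  refine (continuousOn_integral_mul hm hm1 (φ := fun y t => max (y - t) 0 ^ 2 * (2 * y + t) / 6)
    (by fun_prop) fun y hy t ht => ?_).congr fun y hy => ?_
  · have h0 : 0 ≤ max (y - t) 0 := le_max_right _ _
    have h1 : max (y - t) 0 ≤ 1 - t := max_le (by linarith [hy.2]) (by linarith [ht.2])
    rw [abs_of_nonneg (by have := ht.1; have := hy.1; positivity)]
    nlinarith [mul_le_mul h1 h1 h0 (by linarith), hy.1, hy.2, ht.1, ht.2]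
  · refine (integral_zero_one_eq_of_eqOn hy (intervalIntegrable_cubicKernel hm hm1 hy)
      (fun t ht => ?_) (fun t ht => ?_)).symm
    · simp [max_eq_left (sub_nonneg.2 ht.2)]
    · simp [max_eq_right (sub_nonpos.2 ht.1)]


lemma intervalIntegrable_secondPrimitive (hm : ContinuousOn m (Ioo (-1) 1))
    (hm1 : IntervalIntegrable (fun t => (1 - t) * m t) volume 0 1) (hx : x ∈ Icc (0 : ℝ) 1) :
    IntervalIntegrable (secondPrimitive m) volume x 1 :=
  ((continuousOn_secondPrimitive hm hm1).mono (Icc_subset_Icc hx.1 le_rfl)).intervalIntegrable_of_Icc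
    hx.2

lemma hasDerivAt_integral_secondPrimitive (hm : ContinuousOn m (Ioo (-1) 1))
    (hm1 : IntervalIntegrable (fun t => (1 - t) * m t) volume 0 1) (hx : x ∈ Ico (0 : ℝ) 1) :
    HasDerivAt (fun y => ∫ s in y..1, secondPrimitive m s) (-secondPrimitive m x) x := by
  have hx' : x ∈ Ioo (-1 : ℝ) 1 := ⟨by linarith [hx.1], hx.2⟩
  have hF : ContinuousOn (secondPrimitive m) (Ioo (-1) 1) := fun y hy =>
    (hasDerivAt_secondPrimitive hm hy).continuousAt.continuousWithinAt
  exact integral_hasDerivAt_left (intervalIntegrable_secondPrimitive hm hm1 ⟨hx.1, hx.2.le⟩)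
    (hF.stronglyMeasurableAtFilter isOpen_Ioo x hx') (hF.continuousAt (isOpen_Ioo.mem_nhds hx'))

lemma continuousOn_integral_secondPrimitive (hm : ContinuousOn m (Ioo (-1) 1))
    (hm1 : IntervalIntegrable (fun t => (1 - t) * m t) volume 0 1) :
    ContinuousOn (fun y => ∫ s in y..1, secondPrimitive m s) (Icc 0 1) := by
  have := continuousOn_primitive_interval_left (a := 0) (b := 1) (μ := volume)
    (f := secondPrimitive m) ?_
  · rwa [uIcc_of_le zero_le_one] at this
  · rw [uIcc_of_le zero_le_one]
    exact (continuousOn_secondPrimitive hm hm1).integrableOn_Icc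

theorem integral_integral_secondPrimitive (hm : ContinuousOn m (Ioo (-1) 1))
    (hm1 : IntervalIntegrable (fun t => (1 - t) * m t) volume 0 1) :
    ∫ x in (0 : ℝ)..1, ∫ s in x..1, secondPrimitive m s
      = ∫ t in (0 : ℝ)..1, (1 - t) ^ 2 * (2 + t) / 6 * m t := by
  have hG := continuousOn_integral_secondPrimitive hm hm1
  have hderiv : ∀ x ∈ Ioo (0 : ℝ) 1, HasDerivAt
      (fun y => y * (∫ s in y..1, secondPrimitive m s) + cubicPrimitive m y)
      (∫ s in x..1, secondPrimitive m s) x := fun x hx => by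
    have h := ((hasDerivAt_id' x).mul (hasDerivAt_integral_secondPrimitive hm hm1
      (Ioo_subset_Ico_self hx))).add (hasDerivAt_cubicPrimitive hm ⟨by linarith [hx.1], hx.2⟩)
    exact h.congr_deriv (by ring)
  rw [integral_eq_sub_of_hasDerivAt_of_le zero_le_one
    ((continuousOn_id.mul hG).add (continuousOn_cubicPrimitive hm hm1)) hderiv
    (hG.intervalIntegrable_of_Icc zero_le_one)]
  simp [cubicPrimitive]

noncomputable def correctionProfile (C : ℝ) (m : ℝ → ℝ) (x : ℝ) : ℝ :=
  C / 2 * (1 - x ^ 2) - ∫ s in x..1, secondPrimitive m s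

variable {C : ℝ}

lemma hasDerivAt_correctionProfile (hm : ContinuousOn m (Ioo (-1) 1))
    (hm1 : IntervalIntegrable (fun t => (1 - t) * m t) volume 0 1) (hx : x ∈ Ico (0 : ℝ) 1) :
    HasDerivAt (correctionProfile C m) (secondPrimitive m x - x * C) x :=
  ((((hasDerivAt_pow 2 x).const_sub 1).const_mul (C / 2)).sub
    (hasDerivAt_integral_secondPrimitive hm hm1 hx)).congr_deriv (by ring)

lemma hasDerivAt_secondPrimitive_sub_mul_const (hm : ContinuousOn m (Ioo (-1) 1))
    (hx : x ∈ Ico (0 : ℝ) 1) :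
    HasDerivAt (fun y => secondPrimitive m y - y * C) ((∫ t in (0 : ℝ)..x, m t) - C) x :=
  (hasDerivAt_secondPrimitive hm ⟨by linarith [hx.1], hx.2⟩).sub (hasDerivAt_mul_const C)

lemma hasDerivAt_integral_sub_const (hm : ContinuousOn m (Ioo (-1) 1))
    (hx : x ∈ Ico (0 : ℝ) 1) :
    HasDerivAt (fun y => (∫ t in (0 : ℝ)..y, m t) - C) (m x) x :=
  (hasDerivAt_integral_of_continuousOn_Ioo hm ⟨by linarith [hx.1], hx.2⟩).sub_const C

theorem contDiffOn_correctionProfile (hm : ContinuousOn m (Ioo (-1) 1))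
    (hm1 : IntervalIntegrable (fun t => (1 - t) * m t) volume 0 1) :
    ContDiffOn ℝ 3 (correctionProfile C m) (Ico 0 1) :=
  have hs := uniqueDiffOn_Ico (0 : ℝ) 1
  contDiffOn_succ_of_hasDerivWithinAt (k := 2) hs
    (fun _ hx => (hasDerivAt_correctionProfile hm hm1 hx).hasDerivWithinAt) <|
  contDiffOn_succ_of_hasDerivWithinAt hs
    (fun _ hx => (hasDerivAt_secondPrimitive_sub_mul_const hm hx).hasDerivWithinAt) <|
  contDiffOn_succ_of_hasDerivWithinAt (k := 0) hs
    (fun _ hx => (hasDerivAt_integral_sub_const hm hx).hasDerivWithinAt) <|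
  contDiffOn_zero.2 (hm.mono fun _ hx => ⟨by linarith [hx.1], hx.2⟩)

theorem derivWithin_eqOn_of_eqOn_correctionProfile (hm : ContinuousOn m (Ioo (-1) 1))
    (hm1 : IntervalIntegrable (fun t => (1 - t) * m t) volume 0 1) {H : ℝ → ℝ}
    (hH : EqOn H (correctionProfile C m) (Ico 0 1)) :
    EqOn (dIco H) (fun x => secondPrimitive m x - x * C) (Ico 0 1) ∧
    EqOn (dIco (dIco H)) (fun x => (∫ t in (0 : ℝ)..x, m t) - C) (Ico 0 1) ∧
    EqOn (d3Ico H) m (Ico 0 1) :=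
  have hs := uniqueDiffOn_Ico (0 : ℝ) 1
  have h1 := derivWithin_eqOn_of_hasDerivWithinAt hs hH
    fun _ hx => (hasDerivAt_correctionProfile hm hm1 hx).hasDerivWithinAt
  have h2 := derivWithin_eqOn_of_hasDerivWithinAt hs h1
    fun _ hx => (hasDerivAt_secondPrimitive_sub_mul_const hm hx).hasDerivWithinAt
  ⟨h1, h2, derivWithin_eqOn_of_hasDerivWithinAt hs h2
    fun _ hx => (hasDerivAt_integral_sub_const hm hx).hasDerivWithinAt⟩

lemma continuousOn_correctionProfile (hm : ContinuousOn m (Ioo (-1) 1))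
    (hm1 : IntervalIntegrable (fun t => (1 - t) * m t) volume 0 1) :
    ContinuousOn (correctionProfile C m) (Icc 0 1) :=
  (continuous_const.mul (continuous_const.sub (continuous_pow 2))).continuousOn.sub
    (continuousOn_integral_secondPrimitive hm hm1)

lemma tendsto_correctionProfile_one (hm : ContinuousOn m (Ioo (-1) 1))
    (hm1 : IntervalIntegrable (fun t => (1 - t) * m t) volume 0 1) :
    Tendsto (correctionProfile C m) (𝓝[<] 1) (𝓝 0) := by
  have h := (continuousOn_correctionProfile (C := C) hm hm1 1 ⟨zero_le_one, le_rfl⟩).tendsto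
  rw [correctionProfile, integral_same, one_pow, sub_self, mul_zero, sub_zero] at h
  rw [← nhdsWithin_Ico_eq_nhdsLT one_pos]
  exact h.mono_left (nhdsWithin_mono 1 Ico_subset_Icc_self)

lemma integral_correctionProfile (hm : ContinuousOn m (Ioo (-1) 1))
    (hm1 : IntervalIntegrable (fun t => (1 - t) * m t) volume 0 1) :
    ∫ x in (0 : ℝ)..1, correctionProfile C m x
      = C / 3 - ∫ t in (0 : ℝ)..1, (1 - t) ^ 2 * (2 + t) / 6 * m t := by
  rw [← integral_integral_secondPrimitive hm hm1]
  unfold correctionProfile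
  rw [integral_sub (Continuous.intervalIntegrable (by fun_prop) 0 1)
    ((continuousOn_integral_secondPrimitive hm hm1).intervalIntegrable_of_Icc zero_le_one)]
  norm_num [intervalIntegral.integral_const_mul]
  ring

end CorrectionProfile

open CorrectionProfile

lemma continuousOn_mul_one_sub_sq_rpow (n : ℝ) :
    ContinuousOn (fun t : ℝ => t * (1 - t ^ 2) ^ (1 - n)) (Ioo (-1) 1) :=
  continuousOn_id.mul <| ContinuousOn.rpow_const (by fun_prop) fun t ht =>
    Or.inl (by nlinarith [ht.1, ht.2])

lemma intervalIntegrable_one_sub_mul_mul_one_sub_sq_rpow {n : ℝ} (hn : n < 3) :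
    IntervalIntegrable (fun t : ℝ => (1 - t) * (t * (1 - t ^ 2) ^ (1 - n))) volume 0 1 := by
  have hsing : IntervalIntegrable (fun t : ℝ => (1 - t) ^ (2 - n)) volume 0 1 := by
    have h : IntervalIntegrable (fun t : ℝ => t ^ (2 - n)) volume 0 1 :=
      intervalIntegrable_rpow' (by linarith)
    simpa using (h.comp_sub_left 1).symm
  refine (hsing.continuousOn_mul (g := fun t => t * (1 + t) ^ (1 - n)) ?_).congr_uIoo fun t ht => ?_
  · exact continuousOn_id.mul <| ContinuousOn.rpow_const (by fun_prop) fun t ht =>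
      Or.inl (by rw [uIcc_of_le zero_le_one] at ht; linarith [ht.1])
  · rw [uIoo_of_le zero_le_one] at ht
    have h1 : 0 < 1 - t := by linarith [ht.2]
    dsimp only
    rw [show (1 : ℝ) - t ^ 2 = (1 - t) * (1 + t) by ring,
      Real.mul_rpow h1.le (by linarith [ht.1]), show 2 - n = 1 + (1 - n) by ring,
      Real.rpow_add h1, Real.rpow_one]
    ring

/-- The general first-order correction profile for strong contact-line friction,
`n ∈ [1,3)`: the constant `C₁ = (1/2)∫₀¹ x(x³−3x+2)(1−x²)^{1−n} dx` is finite, the function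
`H₁(x) = (C₁/2)(1−x²) − ∫ₓ¹ ∫₀^{x₁} x₂(x₁−x₂)(1−x₂²)^{1−n} dx₂ dx₁` is well defined and
C³ on `[0,1)`, and satisfies `H₁''' (x) = x(1−x²)^{1−n}` on `(0,1)`, `H₁'(0) = 0`,
`H₁''(0) = −C₁`, `H₁(x) → 0` as `x → 1⁻`, and `∫₀¹ H₁ = 0`. -/
theorem correction_profile_general
    (n : ℝ) (hn : n ∈ Set.Ico (1:ℝ) 3)
    (C₁ : ℝ) (hC₁ : C₁ = 1 / 2 * ∫ x in (0:ℝ)..1, x * (x ^ 3 - 3 * x + 2) * (1 - x ^ 2) ^ (1 - n))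
    (H₁ : ℝ → ℝ)
    (hH₁ : ∀ x ∈ Set.Ico (0:ℝ) 1, H₁ x =
      C₁ / 2 * (1 - x ^ 2) -
        ∫ x₁ in x..1, ∫ x₂ in (0:ℝ)..x₁, x₂ * (x₁ - x₂) * (1 - x₂ ^ 2) ^ (1 - n)) :
    IntervalIntegrable (fun x => x * (x ^ 3 - 3 * x + 2) * (1 - x ^ 2) ^ (1 - n))
      MeasureTheory.volume 0 1 ∧
    (∀ x₁ ∈ Set.Icc (0:ℝ) 1, IntervalIntegrable
      (fun x₂ => x₂ * (x₁ - x₂) * (1 - x₂ ^ 2) ^ (1 - n)) MeasureTheory.volume 0 x₁) ∧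
    (∀ x ∈ Set.Ico (0:ℝ) 1, IntervalIntegrable
      (fun x₁ => ∫ x₂ in (0:ℝ)..x₁, x₂ * (x₁ - x₂) * (1 - x₂ ^ 2) ^ (1 - n))
      MeasureTheory.volume x 1) ∧
    ContDiffOn ℝ 3 H₁ (Set.Ico 0 1) ∧
    (∀ x ∈ Set.Ioo (0:ℝ) 1, d3Ico H₁ x = x * (1 - x ^ 2) ^ (1 - n)) ∧
    dIco H₁ 0 = 0 ∧
    dIco (dIco H₁) 0 = -C₁ ∧
    Filter.Tendsto H₁ (nhdsWithin 1 (Set.Iio 1)) (nhds 0) ∧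
    (∫ x in (0:ℝ)..1, H₁ x) = 0 := by
  set m : ℝ → ℝ := fun t => t * (1 - t ^ 2) ^ (1 - n) with hm_def
  have hm : ContinuousOn m (Ioo (-1) 1) := continuousOn_mul_one_sub_sq_rpow n
  have hm1 : IntervalIntegrable (fun t => (1 - t) * m t) volume 0 1 :=
    intervalIntegrable_one_sub_mul_mul_one_sub_sq_rpow hn.2
  have hkernel (x₁ t : ℝ) : t * (x₁ - t) * (1 - t ^ 2) ^ (1 - n) = (x₁ - t) * m t := by
    simp only [hm_def]; ring
  have hweight (t : ℝ) : t * (t ^ 3 - 3 * t + 2) * (1 - t ^ 2) ^ (1 - n)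
      = 6 * ((1 - t) ^ 2 * (2 + t) / 6 * m t) := by
    simp only [hm_def]; ring
  simp only [hkernel, hweight, intervalIntegral.integral_const_mul] at hC₁ hH₁ ⊢
  have hH : EqOn H₁ (correctionProfile C₁ m) (Ico 0 1) := hH₁
  obtain ⟨hd1, hd2, hd3⟩ := derivWithin_eqOn_of_eqOn_correctionProfile hm hm1 hH
  refine ⟨by simpa using
      (intervalIntegrable_cubicKernel hm hm1 ⟨zero_le_one, le_rfl⟩).const_mul 6,
    fun x₁ hx₁ => intervalIntegrable_sub_mul hm hm1 hx₁,
    fun x hx => intervalIntegrable_secondPrimitive hm hm1 ⟨hx.1, hx.2.le⟩,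
    (contDiffOn_correctionProfile hm hm1).congr hH, fun x hx => hd3 ⟨hx.1.le, hx.2⟩,
    (hd1 ⟨le_rfl, one_pos⟩).trans (by simp [secondPrimitive]),
    (hd2 ⟨le_rfl, one_pos⟩).trans (by simp),
    (tendsto_correctionProfile_one hm hm1).congr'
      (eventuallyEq_of_mem (Ico_mem_nhdsLT one_pos) hH.symm),
    ?_⟩
  rw [integral_congr_uIoo (hH.mono (by rw [uIoo_of_le zero_le_one]; exact Ioo_subset_Ico_self)),
    integral_correctionProfile hm hm1, hC₁]
  ring
end
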